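/- arXiv:2603.18094 — 5 statements merged into one kernel-verified Lean document; each statement's English description precedes it below -/
import Mathlib

section
/- Let 0 < r < 1/4 and γ = 1/2 - √(1/4 - r). Suppose a nonnegative sequence (η_s) of reals satisfies η_1 ≤ r·η_2 and, for each s ≥ 2, η_s ≤ γ·η_{s-1} + r·η_{s+1}. Then η_s ≤ γ·η_{s+1} for all s ≥ 1, and consequently η_1 ≤ γ^{S-1}·η_S for all S ≥ 1. -/
/-- Let `0 < r < 1/4` and `γ = 1/2 - √(1/4 - r)`. If a nonnegative real sequence `η`
satisfies `η 1 ≤ r * η 2` and, for all `s ≥ 2`, `η s ≤ γ * η (s-1) + r * η (s+1)`,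
then `η s ≤ γ * η (s+1)` for all `s ≥ 1`, and consequently
`η 1 ≤ γ^(S-1) * η S` for all `S ≥ 1`. -/
theorem stmt_3 (r : ℝ) (hr0 : 0 < r) (hr1 : r < 1/4)
    (γ : ℝ) (hγ : γ = 1/2 - Real.sqrt (1/4 - r))
    (η : ℕ → ℝ) (hpos : ∀ s, 0 ≤ η s)
    (h1 : η 1 ≤ r * η 2)
    (h2 : ∀ s, 2 ≤ s → η s ≤ γ * η (s - 1) + r * η (s + 1)) :
    (∀ s, 1 ≤ s → η s ≤ γ * η (s + 1)) ∧
    (∀ S, 1 ≤ S → η 1 ≤ γ ^ (S - 1) * η S) := by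
  have hrle : (0:ℝ) ≤ 1/4 - r := by linarith
  have ht2 : (Real.sqrt (1/4 - r))^2 = 1/4 - r := Real.sq_sqrt hrle
  have ht0 : 0 ≤ Real.sqrt (1/4 - r) := Real.sqrt_nonneg _
  have htlt : Real.sqrt (1/4 - r) < 1/2 := by nlinarith
  have hγ0 : 0 < γ := by rw [hγ]; linarith
  have hsq : 0 < Real.sqrt (1/4 - r) := Real.sqrt_pos.mpr (by linarith)
  have hγ1 : γ < 1/2 := by rw [hγ]; linarith
  have hkey : γ * (1 - γ) = r := by rw [hγ]; nlinarith
  have main : ∀ s, 1 ≤ s → η s ≤ γ * η (s + 1) := by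
    intro s hs
    induction s with
    | zero => omega
    | succ n ih =>
      rcases Nat.lt_or_ge n 1 with h | h
      · interval_cases n
        calc η 1 ≤ r * η 2 := h1
          _ ≤ γ * η 2 := by
            have hrγ : r ≤ γ := by nlinarith [sq_nonneg γ]
            exact mul_le_mul_of_nonneg_right hrγ (hpos 2)
      · have prev := ih h
        have hb := h2 (n+1) (by omega)
        simp only [Nat.add_sub_cancel] at hb
        have hm := mul_le_mul_of_nonneg_left prev hγ0.le
        nlinarith [hpos (n+1), hpos (n+2), mul_nonneg hγ0.le (hpos (n+2))]
  refine ⟨main, ?_⟩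
  intro S hS
  induction S with
  | zero => omega
  | succ n ih =>
    rcases Nat.lt_or_ge n 1 with h | h
    · interval_cases n
      simpa using le_refl (η 1)
    
    · have hi := ih h
      have hn := main n h
      calc η 1 ≤ γ ^ (n - 1) * η n := hi
        _ ≤ γ ^ (n - 1) * (γ * η (n+1)) := by
            exact mul_le_mul_of_nonneg_left hn (pow_nonneg hγ0.le _)
        _ = γ ^ (n + 1 - 1) * η (n+1) := by
            rw [Nat.add_sub_cancel, ← mul_assoc, ← pow_succ]
            congr 2
            omega
end

section
/- Let 0 < r < 1 and let γ ∈ (r, 1) satisfy γ(1-γ) = r. Suppose (η_s)_{s=1}^{S} is a nonnegative real sequence with η_1 ≤ r·η_2 and, for all 2 ≤ s ≤ S-1, η_s ≤ γ·η_{s-1} + r·η_{s+1}. Then η_s ≤ γ·η_{s+1} for all 1 ≤ s ≤ S-1, and hence η_1 ≤ γ^{S-1}·η_S. -/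
/-- Let `0 < r < 1` and `γ ∈ (r, 1)` with `γ(1-γ) = r`. If a nonnegative real sequence
`η` satisfies `η 1 ≤ r * η 2` and, for all `2 ≤ s ≤ S-1`,
`η s ≤ γ * η (s-1) + r * η (s+1)`, then `η s ≤ γ * η (s+1)` for all `1 ≤ s ≤ S-1`,
and hence `η 1 ≤ γ^(S-1) * η S`. -/
theorem stmt_4 (r γ : ℝ) (hr0 : 0 < r) (hr1 : r < 1)
    (hγr : r < γ) (hγ1 : γ < 1) (hγ : γ * (1 - γ) = r)
    (S : ℕ) (hS : 1 ≤ S)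
    (η : ℕ → ℝ) (hpos : ∀ s, 0 ≤ η s)
    (h1 : η 1 ≤ r * η 2)
    (h2 : ∀ s, 2 ≤ s → s ≤ S - 1 → η s ≤ γ * η (s - 1) + r * η (s + 1)) :
    (∀ s, 1 ≤ s → s ≤ S - 1 → η s ≤ γ * η (s + 1)) ∧
    η 1 ≤ γ ^ (S - 1) * η S := by
  have key : ∀ s, 1 ≤ s → s ≤ S - 1 → η s ≤ γ * η (s + 1) := by
    intro s
    induction s with
    | zero => intro h; omega
    | succ n ih =>
      intro h1' h2'
      rcases Nat.eq_zero_or_pos n with hn | hn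
      · subst hn
        calc η 1 ≤ r * η 2 := h1
          _ ≤ γ * η 2 := mul_le_mul_of_nonneg_right (le_of_lt hγr) (hpos 2)
      · have hprev : η n ≤ γ * η (n + 1) := ih hn (le_trans (Nat.le_succ n) h2')
        have hrec : η (n + 1) ≤ γ * η n + r * η (n + 2) := by
          have := h2 (n + 1) (by omega) h2'
          simpa using this
        have hA : 0 ≤ η (n + 1) := hpos _
        have hB : 0 ≤ η (n + 2) := hpos _
        nlinarith [mul_le_mul_of_nonneg_left hprev (le_of_lt (lt_trans hr0 hγr)),
          mul_nonneg (le_of_lt (lt_trans hr0 hγr)) hA]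
  refine ⟨key, ?_⟩
  have iter : ∀ k, k ≤ S - 1 → η 1 ≤ γ ^ k * η (1 + k) := by
    intro k
    induction k with
    | zero => intro _; simpa using le_refl (η 1)
    | succ m ih =>
      intro hm
      have h0γ : (0:ℝ) ≤ γ := le_of_lt (lt_trans hr0 hγr)
      calc η 1 ≤ γ ^ m * η (1 + m) := ih (by omega)
        _ ≤ γ ^ m * (γ * η (1 + m + 1)) := by
            exact mul_le_mul_of_nonneg_left (key (1 + m) (by omega) (by omega))
              (pow_nonneg h0γ m)
        _ = γ ^ (m + 1) * η (1 + (m + 1)) := by ring_nf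
  have := iter (S - 1) le_rfl
  have hSe : 1 + (S - 1) = S := by omega
  rwa [hSe] at this
end

section
/- Let U : ℝ≥0^n → ℝ be concave and continuously differentiable, let X ⊆ ℝ≥0^n be nonempty, compact, and convex, and let F = ∇U. Then the set of Nash equilibria of the full potential game F on X (points x ∈ X such that for each coordinate class, mass is placed only on coordinates with maximal payoff F) equals the set of maximizers of U over X, and hence is nonempty, compact, and convex. -/
/-!
A concave differentiable function attains its maximum over a convex set exactly at the points
where its differential is nonpositive in every feasible direction `y - x`. On a product of
simplices this linear condition says precisely that every class puts its mass only on
coordinates of maximal payoff: moving the mass of a coordinate `i` to a coordinate `j` of the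
same class shows necessity, and comparing with the class-wise maximal payoffs shows sufficiency.
The maximizers of a continuous concave function over a nonempty compact convex set form a
nonempty, compact, convex superlevel set.
-/

open Finset Matrix

section ClassSimplices

variable {I C : Type*} [Fintype I] [DecidableEq C] (cls : I → C) (m : C → ℝ)

def classSimplices : Set (I → ℝ) :=
  {x | (∀ i, 0 ≤ x i) ∧ ∀ c, ∑ i ∈ univ.filter (fun i => cls i = c), x i = m c}

variable {cls m}

theorem classSimplices_subset_nonneg : classSimplices cls m ⊆ {x | ∀ i, 0 ≤ x i} :=
  fun _ hx => hx.1

theorem convex_classSimplices : Convex ℝ (classSimplices cls m) := by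
  rintro x ⟨hx₀, hx⟩ y ⟨hy₀, hy⟩ a b ha hb hab
  refine ⟨fun i => ?_, fun c => ?_⟩
  · simpa using add_nonneg (mul_nonneg ha (hx₀ i)) (mul_nonneg hb (hy₀ i))
  · simp only [Pi.add_apply, Pi.smul_apply, smul_eq_mul]
    rw [sum_add_distrib, ← mul_sum, ← mul_sum, hx, hy, ← add_mul, hab, one_mul]

theorem isClosed_classSimplices : IsClosed (classSimplices cls m) := by
  simp only [classSimplices, Set.ofPred_and, Set.ofPred_forall]
  exact (isClosed_iInter fun i => isClosed_le continuous_const (continuous_apply i)).inter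
    (isClosed_iInter fun c => isClosed_eq (by fun_prop) continuous_const)

theorem apply_le_of_mem_classSimplices {x : I → ℝ} (hx : x ∈ classSimplices cls m) (i : I) :
    x i ≤ m (cls i) :=
  hx.2 (cls i) ▸ single_le_sum (fun k _ => hx.1 k) (by simp)

theorem isCompact_classSimplices : IsCompact (classSimplices cls m) :=
  (isCompact_univ_pi fun i => isCompact_Icc (a := 0) (b := m (cls i))).of_isClosed_subset
    isClosed_classSimplices fun _ hx i _ => ⟨hx.1 i, apply_le_of_mem_classSimplices hx i⟩

theorem exists_pos_of_mem_classSimplices {x : I → ℝ} (hx : x ∈ classSimplices cls m) {c : C}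
    (hc : 0 < m c) : ∃ k, cls k = c ∧ 0 < x k := by
  by_contra! h
  have : ∑ k ∈ univ.filter (fun k => cls k = c), x k = 0 :=
    sum_eq_zero fun k hk => le_antisymm (h k (mem_filter.1 hk).2) (hx.1 k)
  exact hc.ne' (hx.2 c ▸ this)

theorem dotProduct_comp_of_mem_classSimplices [Fintype C] {x : I → ℝ}
    (hx : x ∈ classSimplices cls m) (μ : C → ℝ) : x ⬝ᵥ (μ ∘ cls) = ∑ c, m c * μ c := by
  rw [dotProduct, ← sum_fiberwise univ cls]
  refine sum_congr rfl fun c _ => ?_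
  rw [← hx.2 c, sum_mul]
  exact sum_congr rfl fun i hi => by rw [Function.comp_apply, (mem_filter.1 hi).2]

theorem add_single_sub_single_mem_classSimplices [DecidableEq I] {x : I → ℝ}
    (hx : x ∈ classSimplices cls m) {i j : I} (hij : cls j = cls i) :
    x + Pi.single j (x i) - Pi.single i (x i) ∈ classSimplices cls m := by
  refine ⟨fun k => ?_, fun c => ?_⟩
  · have hxi := hx.1 i
    have hxk := hx.1 k
    simp only [Pi.add_apply, Pi.sub_apply, Pi.single_apply]
    split_ifs <;> subst_vars <;> linarith
  · simp only [Pi.add_apply, Pi.sub_apply, sum_sub_distrib, sum_add_distrib, sum_pi_single',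
      mem_filter, mem_univ, true_and, hij, hx.2 c]
    ring

theorem sub_dotProduct_nonpos_of_forall_le [Fintype C] (hm : ∀ c, 0 < m c) {x g : I → ℝ}
    (hx : x ∈ classSimplices cls m) (h : ∀ i, 0 < x i → ∀ j, cls j = cls i → g j ≤ g i)
    {y : I → ℝ} (hy : y ∈ classSimplices cls m) : (y - x) ⬝ᵥ g ≤ 0 := by
  choose k hk_cls hk_pos using fun c => exists_pos_of_mem_classSimplices hx (hm c)
  -- `μ c` is the maximal payoff of class `c`, attained at the coordinate `k c` carrying mass
  set μ : C → ℝ := fun c => g (k c)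
  have hle : g ≤ μ ∘ cls := fun i => h _ (hk_pos _) i (hk_cls _).symm
  have hx_eq : x ⬝ᵥ g = x ⬝ᵥ (μ ∘ cls) := by
    refine sum_congr rfl fun i _ => ?_
    rcases (hx.1 i).eq_or_lt with hi | hi
    · simp [← hi]
    · rw [le_antisymm (hle i) (h i hi _ (hk_cls _))]
  calc (y - x) ⬝ᵥ g = y ⬝ᵥ g - x ⬝ᵥ (μ ∘ cls) := by rw [sub_dotProduct, hx_eq]
    _ ≤ y ⬝ᵥ (μ ∘ cls) - x ⬝ᵥ (μ ∘ cls) :=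
      sub_le_sub_right (dotProduct_le_dotProduct_of_nonneg_left hle hy.1) _
    _ = 0 := by
      rw [dotProduct_comp_of_mem_classSimplices hx, dotProduct_comp_of_mem_classSimplices hy,
        sub_self]

theorem le_of_forall_sub_dotProduct_nonpos [DecidableEq I] {x g : I → ℝ}
    (hx : x ∈ classSimplices cls m) (h : ∀ y ∈ classSimplices cls m, (y - x) ⬝ᵥ g ≤ 0)
    {i : I} (hi : 0 < x i) {j : I} (hij : cls j = cls i) : g j ≤ g i := by
  have := h _ (add_single_sub_single_mem_classSimplices hx hij)
  rw [add_sub_assoc, add_sub_cancel_left, sub_dotProduct, single_dotProduct,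
    single_dotProduct, ← mul_sub] at this
  exact sub_nonpos.1 (nonpos_of_mul_nonpos_right this hi)

theorem forall_sub_dotProduct_nonpos_iff [Fintype C] [DecidableEq I] (hm : ∀ c, 0 < m c)
    {x g : I → ℝ} (hx : x ∈ classSimplices cls m) :
    (∀ y ∈ classSimplices cls m, (y - x) ⬝ᵥ g ≤ 0) ↔
      ∀ i, 0 < x i → ∀ j, cls j = cls i → g j ≤ g i :=
  ⟨fun h _ hi _ hij => le_of_forall_sub_dotProduct_nonpos hx h hi hij,
    fun h _ hy => sub_dotProduct_nonpos_of_forall_le hm hx h hy⟩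

end ClassSimplices

theorem ContinuousLinearMap.apply_eq_dotProduct {I : Type*} [Fintype I] [DecidableEq I]
    (L : (I → ℝ) →L[ℝ] ℝ) (v : I → ℝ) : L v = v ⬝ᵥ fun i => L (Pi.single i 1) := by
  conv_lhs => rw [pi_eq_sum_univ' v]
  simp [dotProduct]

section Concave

variable {E : Type*} [NormedAddCommGroup E] [NormedSpace ℝ E] {s : Set E} {f : E → ℝ} {x : E}

theorem ConcaveOn.sub_le_fderiv_sub (hf : ConcaveOn ℝ s f) (hx : x ∈ s) {y : E} (hy : y ∈ s)
    (hfx : DifferentiableAt ℝ f x) : f y - f x ≤ fderiv ℝ f x (y - x) := by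
  set γ : ℝ →ᵃ[ℝ] E := AffineMap.lineMap x y
  have hline : ConcaveOn ℝ (Set.Icc 0 1) (f ∘ γ) :=
    (hf.comp_affineMap γ).subset (fun _ ht => hf.1.lineMap_mem hx hy ht) (convex_Icc 0 1)
  have hderiv : HasDerivAt (f ∘ γ) (fderiv ℝ f x (y - x)) 0 := by
    have hfγ : HasFDerivAt f (fderiv ℝ f x) (γ 0) := by
      simpa [γ] using hfx.hasFDerivAt
    exact hfγ.comp_hasDerivAt 0 AffineMap.hasDerivAt_lineMap
  simpa [slope, γ] using hline.slope_le_of_hasDerivAt (Set.left_mem_Icc.2 zero_le_one)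
    (Set.right_mem_Icc.2 zero_le_one) zero_lt_one hderiv

theorem ConcaveOn.isMaxOn_iff_fderiv_sub_nonpos (hf : ConcaveOn ℝ s f) (hx : x ∈ s)
    (hfx : DifferentiableAt ℝ f x) : IsMaxOn f s x ↔ ∀ y ∈ s, fderiv ℝ f x (y - x) ≤ 0 :=
  ⟨fun h _ hy => h.localize.hasFDerivWithinAt_nonpos hfx.hasFDerivAt.hasFDerivWithinAt
      (sub_mem_posTangentConeAt_of_segment_subset (hf.1.segment_subset hx hy)),
    fun h y hy => sub_nonpos.1 ((hf.sub_le_fderiv_sub hx hy hfx).trans (h y hy))⟩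

end Concave

theorem setOf_isMaxOn_eq {α β : Type*} [Preorder β] {s : Set α} {f : α → β} {a : α}
    (has : a ∈ s) (ha : IsMaxOn f s a) : {x ∈ s | IsMaxOn f s x} = {x ∈ s | f a ≤ f x} := by
  ext x
  exact and_congr_right fun _ => ⟨fun hx => hx has, fun hx _ hy => (ha hy).trans hx⟩

/-- Let `U` be a concave, continuously differentiable potential on the nonnegative
orthant, let `X` be the (nonempty) product of simplices `{x ≥ 0 : ∑_{i : cls i = c} x i = m c}`,
and let `F = ∇U` (coordinatewise partial derivatives). Then the set of Nash equilibria
of the full potential game `F` on `X` (points placing mass only on coordinates with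
class-maximal payoff) equals the set of maximizers of `U` over `X`, and hence is
nonempty, compact, and convex. -/
theorem stmt_5 {I C : Type*} [Fintype I] [DecidableEq I] [Fintype C] [DecidableEq C]
    (cls : I → C) (m : C → ℝ) (hm : ∀ c, 0 < m c)
    (U : (I → ℝ) → ℝ) (hU : ContDiff ℝ 1 U)
    (hUconc : ConcaveOn ℝ {x : I → ℝ | ∀ i, 0 ≤ x i} U)
    (X : Set (I → ℝ))
    (hX : X = {x | (∀ i, 0 ≤ x i) ∧
      ∀ c, ∑ i ∈ Finset.univ.filter (fun i => cls i = c), x i = m c})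
    (hXne : X.Nonempty)
    (F : (I → ℝ) → I → ℝ)
    (hF : ∀ x i, F x i = fderiv ℝ U x (Pi.single i 1))
    (NE : Set (I → ℝ))
    (hNE : NE = {x ∈ X | ∀ i, 0 < x i → ∀ j, cls j = cls i → F x j ≤ F x i}) :
    NE = {x ∈ X | ∀ y ∈ X, U y ≤ U x} ∧ NE.Nonempty ∧ IsCompact NE ∧ Convex ℝ NE := by
  obtain rfl : X = classSimplices cls m := hX
  have hconc : ConcaveOn ℝ (classSimplices cls m) U :=
    hUconc.subset classSimplices_subset_nonneg convex_classSimplices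
  have hNE_max : NE = {x ∈ classSimplices cls m | IsMaxOn U (classSimplices cls m) x} := by
    subst hNE
    ext x
    refine and_congr_right fun hx => ?_
    have hgrad : ∀ v, fderiv ℝ U x v = v ⬝ᵥ F x := fun v => by
      rw [(fderiv ℝ U x).apply_eq_dotProduct]
      exact congrArg _ (funext fun i => (hF x i).symm)
    rw [hconc.isMaxOn_iff_fderiv_sub_nonpos hx (hU.differentiable one_ne_zero x)]
    simp only [hgrad, forall_sub_dotProduct_nonpos_iff hm hx]
  obtain ⟨x₀, hx₀, hmax⟩ :=
    isCompact_classSimplices.exists_isMaxOn hXne hU.continuous.continuousOn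
  have hNE_ge : NE = {x ∈ classSimplices cls m | U x₀ ≤ U x} :=
    hNE_max.trans (setOf_isMaxOn_eq hx₀ hmax)
  refine ⟨hNE_max, hNE_ge ▸ ⟨x₀, hx₀, le_rfl⟩, hNE_ge ▸ ?_, hNE_ge ▸ hconc.convex_ge _⟩
  exact isCompact_classSimplices.inter_right (isClosed_le continuous_const hU.continuous)
end

section
/- Consider the linear program max Σ_a w_a ν_a subject to ν_a ≥ 0, Σ_a ν_a = m·ρ_d, and m·ρ_n - Σ_a τ̃_a ν_a ≥ 0, where for a given feasible point f* with Σ_a f*_a = m·ρ_d, f*_a ≥ 0, and average payoff w̄ = Σ_a f*_a w_a / (m ρ_d), the tolls are defined by τ̃_a = ρ_n/ρ_d + α(w_a - w̄) when f*_a > 0 and τ̃_a ≥ ρ_n/ρ_d + α(w_a - w̄) when f*_a = 0, for some α > 0. Then f* is an optimal solution of the LP. -/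
/-!
`f*` is certified optimal by the LP dual solution `y_t = 1/α`, `y_m = w̄ - ρn / (α ρd)`:
the toll condition says exactly that `w_a ≤ y_t τ̃_a + y_m` for every action, so weak duality
bounds every feasible objective by `y_t (m ρn) + y_m (m ρd) = w̄ m ρd`, which is the objective
value of `f*` by the definition of `w̄`.
-/

open Finset

theorem sum_mul_le_of_dual_feasible {ι R : Type*} [Fintype ι] [CommSemiring R] [PartialOrder R]
    [IsOrderedRing R] {w τ ν : ι → R} {y z B D : R} (hy : 0 ≤ y)
    (hdual : ∀ a, w a ≤ y * τ a + z) (hν : ∀ a, 0 ≤ ν a) (hsum : ∑ a, ν a = D)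
    (hbudget : ∑ a, τ a * ν a ≤ B) :
    ∑ a, w a * ν a ≤ y * B + z * D := by
  calc ∑ a, w a * ν a ≤ ∑ a, (y * τ a + z) * ν a :=
        sum_le_sum fun a _ => mul_le_mul_of_nonneg_right (hdual a) (hν a)
    _ = y * ∑ a, τ a * ν a + z * ∑ a, ν a := by
        simp only [add_mul, sum_add_distrib, mul_sum, mul_assoc]
    _ ≤ y * B + z * D := by rw [hsum]; gcongr

theorem stmt_10_general {A : Type*} [Fintype A]
    (m ρd ρn α : ℝ) (hm : 0 < m) (hρd : 0 < ρd) (hα : 0 < α)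
    (w τ f : A → ℝ) (hf0 : ∀ a, 0 ≤ f a)
    (wbar : ℝ) (hwbar : wbar = (∑ a, f a * w a) / (m * ρd))
    (hτ1 : ∀ a, 0 < f a → τ a = ρn / ρd + α * (w a - wbar))
    (hτ2 : ∀ a, f a = 0 → ρn / ρd + α * (w a - wbar) ≤ τ a) :
    ∀ ν : A → ℝ, (∀ a, 0 ≤ ν a) → (∑ a, ν a = m * ρd) →
      0 ≤ m * ρn - ∑ a, τ a * ν a →
      ∑ a, w a * ν a ≤ ∑ a, w a * f a := by
  intro ν hν hνsum hνbudget
  have hdual : ∀ a, w a ≤ α⁻¹ * τ a + (wbar - α⁻¹ * (ρn / ρd)) := by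
    intro a
    have htoll : ρn / ρd + α * (w a - wbar) ≤ τ a :=
      (hf0 a).eq_or_lt.elim (fun h => hτ2 a h.symm) fun h => (hτ1 a h).ge
    have hslack : α⁻¹ * τ a + (wbar - α⁻¹ * (ρn / ρd)) - w a
        = α⁻¹ * (τ a - (ρn / ρd + α * (w a - wbar))) := by
      field_simp
      ring
    linarith [mul_nonneg (inv_nonneg.2 hα.le) (sub_nonneg.2 htoll)]
  have hvalue : ∑ a, w a * f a = wbar * (m * ρd) := by
    rw [hwbar]
    simp_rw [mul_comm (w _)]
    field_simp
  calc ∑ a, w a * ν a ≤ α⁻¹ * (m * ρn) + (wbar - α⁻¹ * (ρn / ρd)) * (m * ρd) :=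
        sum_mul_le_of_dual_feasible (inv_nonneg.2 hα.le) hdual hν hνsum (by linarith)
    _ = ∑ a, w a * f a := by
        rw [hvalue]
        field_simp
        ring

/-- Optimality of `f*` in the toll LP: with tolls `τ̃_a = ρn/ρd + α (w_a - w̄)` on the
support of `f*` (and `τ̃_a ≥ ρn/ρd + α (w_a - w̄)` off the support), the feasible point
`f*` maximizes `∑_a w_a ν_a` over all `ν ≥ 0` with `∑_a ν_a = m ρd` and
`m ρn - ∑_a τ̃_a ν_a ≥ 0`. -/
theorem stmt_10 {A : Type*} [Fintype A]
    (m ρd ρn α : ℝ) (hm : 0 < m) (hρd : 0 < ρd) (hρn : 0 < ρn) (hα : 0 < α)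
    (w τ f : A → ℝ) (hf0 : ∀ a, 0 ≤ f a) (hfsum : ∑ a, f a = m * ρd)
    (wbar : ℝ) (hwbar : wbar = (∑ a, f a * w a) / (m * ρd))
    (hτ1 : ∀ a, 0 < f a → τ a = ρn / ρd + α * (w a - wbar))
    (hτ2 : ∀ a, f a = 0 → ρn / ρd + α * (w a - wbar) ≤ τ a) :
    ∀ ν : A → ℝ, (∀ a, 0 ≤ ν a) → (∑ a, ν a = m * ρd) →
      0 ≤ m * ρn - ∑ a, τ a * ν a →
      ∑ a, w a * ν a ≤ ∑ a, w a * f a :=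
  stmt_10_general m ρd ρn α hm hρd hα w τ f hf0 wbar hwbar hτ1 hτ2
end

section
/- Let η be the unique stationary distribution of the two-action threshold policy token chain on {0,…,k̄}: below threshold τ_q the agent plays action p with integer toll τ_p ≤ 0, at or above τ_q the agent plays q with integer toll τ_q > 0; the combined jump chain increments by one token with probability ρ_n/(ρ_n+ρ_d) and applies the toll with probability ρ_d/(ρ_n+ρ_d), saturating at k̄. If g̃_p = Σ_{k<τ_q} η(k) and g̃_q = Σ_{k≥τ_q} η(k), then stationarity of expected token drift gives -g̃_p τ_p - g̃_q τ_q + (1 - η(k̄))·ρ_n/ρ_d = 0. -/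
/-- Stationary token-drift balance for the two-action threshold policy chain
(equation (22) in the proof of Proposition 2): for the jump chain that gains one token
with probability `ρn/(ρn+ρd)` (saturating at `k̄`) and pays the toll (`τp ≤ 0` below the
threshold `τq`, `τq > 0` at or above it, saturating at `k̄`) with probability
`ρd/(ρn+ρd)`, any stationary distribution `η` satisfies
`-g̃p τp - g̃q τq + (1 - η(k̄)) ρn/ρd = 0`, where `g̃p = ∑_{k < τq} η k` and
`g̃q = ∑_{k ≥ τq} η k`. -/
theorem stmt_17 (kbar : ℕ) (τp τq : ℤ) (ρn ρd : ℝ)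
    (hρn : 0 < ρn) (hρd : 0 < ρd)
    (hτp : τp ≤ 0) (hτq : 0 < τq) (hτqk : τq ≤ (kbar : ℤ))
    (hnosat : τq - τp ≤ (kbar : ℤ) + 1)
    (P : Fin (kbar + 1) → Fin (kbar + 1) → ℝ)
    (hP : ∀ i j : Fin (kbar + 1),
      P i j = (if (j : ℕ) = min ((i : ℕ) + 1) kbar then ρn / (ρn + ρd) else 0)
        + (if (j : ℤ) = min ((i : ℤ) - (if (i : ℤ) < τq then τp else τq)) (kbar : ℤ)
            then ρd / (ρn + ρd) else 0))
    (η : Fin (kbar + 1) → ℝ) (hη0 : ∀ i, 0 ≤ η i) (hη1 : ∑ i, η i = 1)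
    (hstat : ∀ j, ∑ i, η i * P i j = η j) :
    -(∑ i ∈ Finset.univ.filter (fun i : Fin (kbar + 1) => (i : ℤ) < τq), η i) * (τp : ℝ)
    - (∑ i ∈ Finset.univ.filter (fun i : Fin (kbar + 1) => τq ≤ (i : ℤ)), η i) * (τq : ℝ)
    + (1 - η ⟨kbar, Nat.lt_succ_self kbar⟩) * (ρn / ρd) = 0 := by
  have hρ : (0:ℝ) < ρn + ρd := by linarith
  set A := ρn / (ρn + ρd) with hA
  set B := ρd / (ρn + ρd) with hB
  set toll : Fin (kbar+1) → ℤ := fun i => if (i:ℤ) < τq then τp else τq with htoll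
  set ηl := η ⟨kbar, Nat.lt_succ_self kbar⟩ with hηl
  -- per-row expected next value
  have key : ∀ i : Fin (kbar+1), ∑ j : Fin (kbar+1), ((j:ℕ):ℝ) * P i j
      = ((i:ℕ):ℝ) + A * (1 - (if (i:ℕ) = kbar then (1:ℝ) else 0)) - B * ((toll i : ℤ):ℝ) := by
    intro i
    have hib : (i:ℕ) ≤ kbar := Nat.lt_succ_iff.mp i.isLt
    have hiz : (0:ℤ) ≤ (i:ℤ) := Int.ofNat_nonneg _
    have hizk : (i:ℤ) ≤ (kbar:ℤ) := by exact_mod_cast hib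
    have ht0 : 0 ≤ (i:ℤ) - toll i := by
      simp only [htoll]; split_ifs with h <;> omega
    have ht1 : (i:ℤ) - toll i ≤ (kbar:ℤ) := by
      simp only [htoll]; split_ifs with h <;> omega
    have hmin2 : min ((i:ℤ) - toll i) (kbar:ℤ) = (i:ℤ) - toll i := min_eq_left ht1
    set m := min ((i:ℕ) + 1) kbar with hm
    have hmlt : m < kbar + 1 := by omega
    set t := ((i:ℤ) - toll i).toNat with htn
    have htlt : t < kbar + 1 := by omega
    have hsum : ∀ j : Fin (kbar+1), ((j:ℕ):ℝ) * P i j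
        = ((j:ℕ):ℝ) * (if (j:ℕ) = m then A else 0)
          + ((j:ℕ):ℝ) * (if (j:ℤ) = (i:ℤ) - toll i then B else 0) := by
      intro j
      rw [hP]
      simp only [htoll] at hmin2 ⊢
      rw [hmin2]
      ring
    rw [Finset.sum_congr rfl (fun j _ => hsum j), Finset.sum_add_distrib]
    have h1 : ∑ j : Fin (kbar+1), ((j:ℕ):ℝ) * (if (j:ℕ) = m then A else 0) = (m:ℝ) * A := by
      rw [Finset.sum_eq_single (⟨m, hmlt⟩ : Fin (kbar+1))]
      · simp
      · intro b _ hb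
        rw [if_neg, mul_zero]
        exact fun hc => hb (Fin.ext hc)
      · simp
    have h2 : ∑ j : Fin (kbar+1), ((j:ℕ):ℝ) * (if (j:ℤ) = (i:ℤ) - toll i then B else 0)
        = (((i:ℤ) - toll i : ℤ):ℝ) * B := by
      rw [Finset.sum_eq_single (⟨t, htlt⟩ : Fin (kbar+1))]
      · have hv : ((⟨t, htlt⟩ : Fin (kbar+1)) : ℤ) = (i:ℤ) - toll i := by
          simp [htn, Int.toNat_of_nonneg ht0]
        rw [if_pos hv]
        have hv2 : (((⟨t, htlt⟩ : Fin (kbar+1)) : ℕ) : ℝ) = (((i:ℤ) - toll i : ℤ):ℝ) := by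
          exact_mod_cast congrArg (Int.cast : ℤ → ℝ) hv
        rw [hv2]
      · intro b _ hb
        rw [if_neg, mul_zero]
        intro hc
        apply hb
        apply Fin.ext
        have hb2 : (b:ℤ) = (t:ℤ) := by rw [hc]; simp [htn, Int.toNat_of_nonneg ht0]
        exact_mod_cast hb2
      · simp
    rw [h1, h2]
    have hmval : (m:ℝ) = ((i:ℕ):ℝ) + 1 - (if (i:ℕ) = kbar then (1:ℝ) else 0) := by
      by_cases h : (i:ℕ) = kbar
      · simp [hm, h]
      · have hme : m = (i:ℕ) + 1 := by omega
        rw [hme]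
        push_cast
        simp [h]
    rw [hmval, hA, hB]
    push_cast
    field_simp
    ring
  -- swap sums using stationarity
  have swap : ∑ j : Fin (kbar+1), ((j:ℕ):ℝ) * η j
      = ∑ i : Fin (kbar+1), η i * ∑ j : Fin (kbar+1), ((j:ℕ):ℝ) * P i j := by
    calc ∑ j : Fin (kbar+1), ((j:ℕ):ℝ) * η j
        = ∑ j : Fin (kbar+1), ∑ i, ((j:ℕ):ℝ) * (η i * P i j) := by
          refine Finset.sum_congr rfl (fun j _ => ?_)
          rw [← Finset.mul_sum, hstat]
      _ = ∑ i : Fin (kbar+1), ∑ j : Fin (kbar+1), ((j:ℕ):ℝ) * (η i * P i j) := Finset.sum_comm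
      _ = ∑ i : Fin (kbar+1), η i * ∑ j : Fin (kbar+1), ((j:ℕ):ℝ) * P i j := by
          refine Finset.sum_congr rfl (fun i _ => ?_)
          rw [Finset.mul_sum]
          exact Finset.sum_congr rfl (fun j _ => by ring)
  simp only [key] at swap
  set T := ∑ i : Fin (kbar+1), η i * ((toll i : ℤ):ℝ) with hT
  have hlast : ∑ i : Fin (kbar+1), η i * (if (i:ℕ) = kbar then (1:ℝ) else 0) = ηl := by
    rw [Finset.sum_eq_single (⟨kbar, Nat.lt_succ_self kbar⟩ : Fin (kbar+1))]
    · simp [hηl]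
    · intro b _ hb
      rw [if_neg, mul_zero]
      exact fun hc => hb (Fin.ext hc)
    · simp
  have expand : ∑ i : Fin (kbar+1), η i *
      (((i:ℕ):ℝ) + A * (1 - (if (i:ℕ) = kbar then (1:ℝ) else 0)) - B * ((toll i : ℤ):ℝ))
      = (∑ j : Fin (kbar+1), ((j:ℕ):ℝ) * η j) + A * 1 - A * ηl - B * T := by
    have step : ∀ i : Fin (kbar+1), η i *
        (((i:ℕ):ℝ) + A * (1 - (if (i:ℕ) = kbar then (1:ℝ) else 0)) - B * ((toll i : ℤ):ℝ))
        = ((i:ℕ):ℝ) * η i + A * η i - A * (η i * (if (i:ℕ) = kbar then (1:ℝ) else 0))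
          - B * (η i * ((toll i : ℤ):ℝ)) := fun i => by ring
    rw [Finset.sum_congr rfl (fun i _ => step i)]
    simp only [Finset.sum_sub_distrib, Finset.sum_add_distrib, ← Finset.mul_sum]
    rw [hη1, hlast, hT]
  rw [expand] at swap
  have hbal : A * (1 - ηl) - B * T = 0 := by linarith
  -- compute T
  have hTval : T = (∑ i ∈ Finset.univ.filter (fun i : Fin (kbar + 1) => (i : ℤ) < τq), η i) * (τp:ℝ)
      + (∑ i ∈ Finset.univ.filter (fun i : Fin (kbar + 1) => τq ≤ (i : ℤ)), η i) * (τq:ℝ) := by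
    rw [hT, ← Finset.sum_filter_add_sum_filter_not Finset.univ (fun i : Fin (kbar+1) => (i:ℤ) < τq)]
    congr 1
    · rw [Finset.sum_mul]
      refine Finset.sum_congr rfl (fun i hi => ?_)
      have hi' : (i:ℤ) < τq := (Finset.mem_filter.mp hi).2
      simp [htoll, hi']
    · rw [Finset.sum_mul]
      refine Finset.sum_congr ?_ (fun i hi => ?_)
      · apply Finset.filter_congr
        intro i _
        simp [not_lt]
      · have hi' : τq ≤ (i:ℤ) := (Finset.mem_filter.mp hi).2
        simp [htoll, not_lt.mpr hi']
  have hmain : ρn * (1 - ηl) = ρd * T := by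
    rw [hA, hB] at hbal
    field_simp at hbal
    linarith
  have hfin : (1 - ηl) * (ρn / ρd) = T := by
    field_simp
    nlinarith [hmain]
  rw [hTval] at hfin
  linarith [hfin]
end
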